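/- For every k ≥ 0, if H_0,…,H_k are nowhere zero then the operator identity L_k∘((1/H_k)·)∘(T_i − T_j^k(b)·) = (T_i − T_j^k(b)·)∘((1/T_j(H_k))·)∘L_{k+1} holds on 𝔊. -/

import Mathlib

/-!
Discrete (quad-graph) setting: the space `𝔊` is modelled by `QG = ℤ → ℤ → ℝ`
(functions `φ(i,j)`), with the shifts `Ti`, `Tj`, their inverses, and the
`k`-fold shifts `TiZ k`, `TjZ k`.  For `g : QG`, pointwise multiplication
`g * φ` models the operator `g·`.
-/

/-- The function space `𝔊` of functions `ℤ² → ℝ`. -/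
abbrev QG : Type := ℤ → ℤ → ℝ

namespace QG

noncomputable section

/-- The shift operator `T_i(φ)(i,j) = φ(i+1,j)`. -/
def Ti (φ : QG) : QG := fun i j => φ (i + 1) j

/-- The shift operator `T_j(φ)(i,j) = φ(i,j+1)`. -/
def Tj (φ : QG) : QG := fun i j => φ i (j + 1)

/-- The `k`-fold shift in `i`. -/
def TiZ (k : ℤ) (φ : QG) : QG := fun i j => φ (i + k) j

/-- The `k`-fold shift in `j`. -/
def TjZ (k : ℤ) (φ : QG) : QG := fun i j => φ i (j + k)

/-- The inverse shift `T_i⁻¹`. -/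
def TiInv (φ : QG) : QG := fun i j => φ (i - 1) j

/-- The inverse shift `T_j⁻¹`. -/
def TjInv (φ : QG) : QG := fun i j => φ i (j - 1)

/-- A function that is nowhere zero. -/
def NowhereZero (φ : QG) : Prop := ∀ i j, φ i j ≠ 0

/-- The linearization operator `L = T_i∘T_j − a·T_i − b·T_j − c·`. -/
def L (a b c : QG) (φ : QG) : QG := Ti (Tj φ) - a * Ti φ - b * Tj φ - c * φ

/-- The pair `(b_k, H_k)` of the Laplace j-transformations:
`b_0 = a`, `H_0 = c + b·T_i⁻¹(a)`,
`b_{k+1} = T_i⁻¹(b_k)·T_j(H_k)/H_k`,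
`H_{k+1} = T_j(H_k) − T_j^k(b)·b_{k+1} + T_j^{k+1}(b)·T_i⁻¹(b_{k+1})`. -/
def bH (a b c : QG) : ℕ → QG × QG
  | 0 => (a, c + b * TiInv a)
  | k + 1 =>
      let bk := TiInv (bH a b c k).1 * Tj (bH a b c k).2 / (bH a b c k).2
      (bk, Tj (bH a b c k).2 - TjZ (k : ℤ) b * bk + TjZ ((k : ℤ) + 1) b * TiInv bk)

/-- The function `b_k`. -/
def bj (a b c : QG) (k : ℕ) : QG := (bH a b c k).1

/-- The Laplace j-invariant `H_k`. -/
def Hj (a b c : QG) (k : ℕ) : QG := (bH a b c k).2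

/-- The operator `L_k`: `L_0 = L` and
`L_k = (T_i − T_j^k(b)·)∘(T_j − T_i⁻¹(b_k)·) − H_k·` for `k ≥ 1`. -/
def Lk (a b c : QG) : ℕ → QG → QG
  | 0, φ => L a b c φ
  | k + 1, φ =>
      Ti (Tj φ - TiInv (bj a b c (k + 1)) * φ)
        - TjZ ((k : ℤ) + 1) b * (Tj φ - TiInv (bj a b c (k + 1)) * φ)
        - Hj a b c (k + 1) * φ

/-- `Bo (k+1)` is the operator `B_k = (T_j − T_i⁻¹(b_k)·)∘B_{k-1}`; `Bo 0 = id` is `B_{-1}`. -/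
def Bo (a b c : QG) : ℕ → QG → QG
  | 0, φ => φ
  | k + 1, φ => Tj (Bo a b c k φ) - TiInv (bj a b c k) * Bo a b c k φ

/-- `Bbar k` is the operator `B̄_k`: `B̄_0 = id`, `B̄_k = (T_j − b_k·)∘B̄_{k-1}`. -/
def Bbar (a b c : QG) : ℕ → QG → QG
  | 0, φ => φ
  | k + 1, φ => Tj (Bbar a b c k φ) - bj a b c (k + 1) * Bbar a b c k φ

/-- `Rchain p` is the composition
`((1/H_0)·)∘(T_i − b·)∘((1/H_1)·)∘(T_i − T_j(b)·)∘···∘((1/H_{p-1})·)∘(T_i − T_j^{p-1}(b)·)`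
(the identity for `p = 0`). -/
def Rchain (a b c : QG) : ℕ → QG → QG
  | 0, φ => φ
  | k + 1, φ => Rchain a b c k ((1 / Hj a b c k) * (Ti φ - TjZ (k : ℤ) b * φ))

end

/-!
Write `L_k = (T_i − β·)∘(T_j − γ·) − H·` with `β = T_j^k(b)`, `γ = T_i⁻¹(b_k)`, `H = H_k`.
Conjugating `T_j − γ·` by `H` and commuting the two first-order factors shows that
`L_{k+1}` has the second factorization `T_j(H)·((T_j − γ·)∘(1/H)·∘(T_i − β·) − id)`;
the recursion for `(b_{k+1}, H_{k+1})` is exactly what makes the commutator term match.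
Substituting both factorizations, each side of the identity becomes
`(T_i − β·)∘((T_j − γ·)∘(1/H)·∘(T_i − β·) − id)`.
-/

def tiSub (β φ : QG) : QG := Ti φ - β * φ

def tjSub (γ φ : QG) : QG := Tj φ - γ * φ

lemma tiSub_sub (β φ ψ : QG) : tiSub β (φ - ψ) = tiSub β φ - tiSub β ψ := by
  funext i j
  simp only [tiSub, Ti, Pi.sub_apply, Pi.mul_apply]
  ring

lemma TjZ_add_one (n : ℤ) (φ : QG) : TjZ (n + 1) φ = Tj (TjZ n φ) := by
  funext i j
  simp only [TjZ, Tj, add_assoc, add_comm (1 : ℤ)]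

lemma tjSub_tiSub (β δ φ : QG) :
    tjSub δ (tiSub β φ)
      = tiSub (Tj β) (tjSub (TiInv δ) φ) - (Tj β * TiInv δ - β * δ) * φ := by
  funext i j
  simp only [tiSub, tjSub, Ti, Tj, TiInv, Pi.sub_apply, Pi.mul_apply, add_sub_cancel_right]
  ring

section NowhereZero

variable {H : QG} (hH : NowhereZero H)
include hH

lemma NowhereZero.tj : NowhereZero (Tj H) := fun i j => hH i (j + 1)

lemma mul_one_div_mul_cancel (ψ : QG) : H * (1 / H * ψ) = ψ := by
  funext i j
  simp [hH i j]

lemma one_div_mul_mul_cancel (ψ : QG) : 1 / H * (H * ψ) = ψ := by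
  funext i j
  simp [hH i j]

lemma mul_tjSub_one_div_mul (γ ψ : QG) :
    Tj H * tjSub γ (1 / H * ψ) = tjSub (γ * Tj H / H) ψ := by
  funext i j
  have hTj : H i (j + 1) ≠ 0 := hH i (j + 1)
  simp only [tjSub, Tj, Pi.sub_apply, Pi.mul_apply, Pi.div_apply, Pi.one_apply]
  field_simp

end NowhereZero

variable (a b c : QG)

lemma bj_succ (k : ℕ) : bj a b c (k + 1) = TiInv (bj a b c k) * Tj (Hj a b c k) / Hj a b c k :=
  rfl

lemma Hj_succ (k : ℕ) :
    Hj a b c (k + 1) = Tj (Hj a b c k) - TjZ k b * bj a b c (k + 1)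
      + TjZ (k + 1) b * TiInv (bj a b c (k + 1)) :=
  rfl

lemma Lk_eq (k : ℕ) (φ : QG) :
    Lk a b c k φ = tiSub (TjZ k b) (tjSub (TiInv (bj a b c k)) φ) - Hj a b c k * φ := by
  cases k with
  | zero =>
    funext i j
    simp only [Lk, L, tiSub, tjSub, bj, Hj, bH, Ti, Tj, TiInv, TjZ, Nat.cast_zero,
      add_zero, add_sub_cancel_right, Pi.sub_apply, Pi.add_apply, Pi.mul_apply]
    ring
  | succ k => rfl

lemma Lk_succ_eq {k : ℕ} (hH : NowhereZero (Hj a b c k)) (φ : QG) :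
    Lk a b c (k + 1) φ = Tj (Hj a b c k) *
      (tjSub (TiInv (bj a b c k)) (1 / Hj a b c k * tiSub (TjZ k b) φ) - φ) := by
  rw [mul_sub, mul_tjSub_one_div_mul hH, ← bj_succ, tjSub_tiSub, Lk_eq, Hj_succ,
    Nat.cast_succ, TjZ_add_one]
  ring

/-- For every `k ≥ 0`, if `H_0, …, H_k` are nowhere zero then the operator
identity `L_k∘((1/H_k)·)∘(T_i − T_j^k(b)·) = (T_i − T_j^k(b)·)∘((1/T_j(H_k))·)∘L_{k+1}`
holds on `𝔊`. -/
theorem statement17 (a b c : QG) (k : ℕ) (hH : ∀ m, m ≤ k → NowhereZero (Hj a b c m)) :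
    ∀ φ : QG,
      Lk a b c k ((1 / Hj a b c k) * (Ti φ - TjZ (k : ℤ) b * φ))
        = Ti ((1 / Tj (Hj a b c k)) * Lk a b c (k + 1) φ)
            - TjZ (k : ℤ) b * ((1 / Tj (Hj a b c k)) * Lk a b c (k + 1) φ) := by
  intro φ
  have hHk := hH k le_rfl
  change Lk a b c k (1 / Hj a b c k * tiSub (TjZ k b) φ)
    = tiSub (TjZ k b) (1 / Tj (Hj a b c k) * Lk a b c (k + 1) φ)
  rw [Lk_eq, mul_one_div_mul_cancel hHk, Lk_succ_eq a b c hHk, one_div_mul_mul_cancel hHk.tj,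
    tiSub_sub]

end QG
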